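/- Let p(m;d) denote the number of admissible pinnacle sets with maximum element m and cardinality d. Then for m - 1 > 2d, p(m;d) = p(m-1;d) + p(m-1;d-1). -/

import Mathlib

/-- `i` is a peak of the permutation `w` of `{1,…,n}` (represented on `Fin n`):
`0 < i < n-1` (0-indexed) and `w(i-1) < w(i) > w(i+1)`. -/
def IsPeak {n : ℕ} (w : Equiv.Perm (Fin n)) (i : Fin n) : Prop :=
  0 < i.val ∧ ∃ h : i.val + 1 < n,
    w ⟨i.val - 1, Nat.lt_of_le_of_lt (Nat.sub_le _ _) i.isLt⟩ < w i ∧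
    w ⟨i.val + 1, h⟩ < w i

/-- The pinnacle set of `w`, as a set of values in `{1,…,n}`. -/
def Pin {n : ℕ} (w : Equiv.Perm (Fin n)) : Set ℕ :=
  {v | ∃ i : Fin n, IsPeak w i ∧ v = (w i).val + 1}

/-- `p_S(n)`: the number of permutations in `S_n` with pinnacle set `S`. -/
noncomputable def pcount (n : ℕ) (S : Set ℕ) : ℕ :=
  Nat.card {w : Equiv.Perm (Fin n) // Pin w = S}

/-- `S` is an admissible pinnacle set. -/
def Admissible (S : Finset ℕ) : Prop :=
  ∃ (n : ℕ) (w : Equiv.Perm (Fin n)), Pin w = ↑S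

/-- `𝔭(m;d)`: the number of admissible pinnacle sets with maximum `m` and
cardinality `d`. -/
noncomputable def padm (m d : ℕ) : ℕ :=
  Nat.card {S : Finset ℕ // Admissible S ∧ S.card = d ∧ ∃ h : S.Nonempty, S.max' h = m}

/-!
Admissibility has a counting description: `S` is a pinnacle set iff `2 · #{y ∈ S | y ≤ x} < x`
for every `x ∈ S`. Necessity: the `k` peaks of value at most `x`, their right neighbours and the
left neighbour of the leftmost one are `2k + 1` distinct positions carrying values below `x`.
Sufficiency, by induction on the length `n`: the value `n + 1` is appended at the end if it is
not in `S`, and otherwise inserted as a new peak between two adjacent non-peaks, which exist by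
pigeonhole because there are fewer than `n / 2` peaks.

Hence, when `2d < m`, the sets counted by `p(m;d)` are the sets `insert m T` with `T ⊆ [0, m)`
admissible of size `d - 1`; sorting these `T` by whether they contain `m - 1` gives the recurrence.
-/

open Finset

def IsPeakAt (f : ℕ → ℕ) (n i : ℕ) : Prop :=
  0 < i ∧ i + 1 < n ∧ f (i - 1) < f i ∧ f (i + 1) < f i

def peakValues (f : ℕ → ℕ) (n : ℕ) : Set ℕ :=
  {v | ∃ i, IsPeakAt f n i ∧ v = f i + 1}

section Peaks

variable {f g : ℕ → ℕ} {n i : ℕ}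

lemma IsPeakAt.not_succ (h : IsPeakAt f n i) : ¬IsPeakAt f n (i + 1) := fun h' => by
  have := h'.2.2.1
  rw [Nat.add_sub_cancel] at this
  exact h.2.2.2.asymm this

lemma not_isPeakAt_of_le (h : n ≤ i + 1) : ¬IsPeakAt f n i :=
  fun hp => by have := hp.2.1; omega

lemma isPeakAt_congr (h : ∀ i < n, f i = g i) : IsPeakAt f n i ↔ IsPeakAt g n i := by
  refine and_congr_right fun _ => and_congr_right fun hn => ?_
  rw [h (i - 1) (by omega), h i (by omega), h (i + 1) hn]

lemma peakValues_congr (h : ∀ i < n, f i = g i) : peakValues f n = peakValues g n := by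
  ext v
  constructor <;> rintro ⟨i, hi, rfl⟩
  · exact ⟨i, (isPeakAt_congr h).1 hi, by rw [h i (by have := hi.2.1; omega)]⟩
  · exact ⟨i, (isPeakAt_congr h).2 hi, by rw [h i (by have := hi.2.1; omega)]⟩

end Peaks

def permSeq {n : ℕ} (w : Equiv.Perm (Fin n)) (i : ℕ) : ℕ :=
  if h : i < n then w ⟨i, h⟩ else 0

lemma permSeq_of_lt {n : ℕ} (w : Equiv.Perm (Fin n)) {i : ℕ} (h : i < n) :
    permSeq w i = w ⟨i, h⟩ := dif_pos h

lemma injOn_permSeq {n : ℕ} (w : Equiv.Perm (Fin n)) : Set.InjOn (permSeq w) (Set.Iio n) := by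
  intro i hi j hj hij
  simp only [Set.mem_Iio] at hi hj
  rw [permSeq_of_lt w hi, permSeq_of_lt w hj] at hij
  simpa using w.injective (Fin.ext hij)

lemma isPeak_iff_isPeakAt {n : ℕ} (w : Equiv.Perm (Fin n)) (i : Fin n) :
    IsPeak w i ↔ IsPeakAt (permSeq w) n i := by
  simp only [IsPeak, IsPeakAt, Fin.lt_def]
  constructor
  · rintro ⟨h0, hn, hl, hr⟩
    rw [permSeq_of_lt w hn, permSeq_of_lt w i.2, permSeq_of_lt w (by omega)]
    exact ⟨h0, hn, hl, hr⟩
  · rintro ⟨h0, hn, hl, hr⟩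
    rw [permSeq_of_lt w hn, permSeq_of_lt w i.2, permSeq_of_lt w (by omega)] at *
    exact ⟨h0, hn, hl, hr⟩

lemma pin_eq_peakValues {n : ℕ} (w : Equiv.Perm (Fin n)) : Pin w = peakValues (permSeq w) n := by
  ext v
  constructor
  · rintro ⟨i, hi, rfl⟩
    exact ⟨i, (isPeak_iff_isPeakAt w i).1 hi, by rw [permSeq_of_lt w i.2]⟩
  · rintro ⟨i, hi, rfl⟩
    have hin : i < n := by have := hi.2.1; omega
    exact ⟨⟨i, hin⟩, (isPeak_iff_isPeakAt w _).2 hi, by rw [permSeq_of_lt w hin]⟩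

lemma exists_pin_eq_peakValues {f : ℕ → ℕ} {n : ℕ}
    (hmaps : Set.MapsTo f (Set.Iio n) (Set.Iio n)) (hinj : Set.InjOn f (Set.Iio n)) :
    ∃ w : Equiv.Perm (Fin n), Pin w = peakValues f n := by
  let g : Fin n → Fin n := fun i => ⟨f i, hmaps i.2⟩
  have hg : Function.Injective g := fun i j hij =>
    Fin.ext (hinj i.2 j.2 (congrArg Fin.val hij))
  refine ⟨Equiv.ofBijective g (Finite.injective_iff_bijective.1 hg), ?_⟩
  rw [pin_eq_peakValues]
  exact peakValues_congr fun i hi => permSeq_of_lt _ hi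

-- For `S = {s₁ < ⋯ < s_d}` this says `s_i > 2i`.
def PinnacleBound (S : Finset ℕ) : Prop :=
  ∀ x ∈ S, 2 * #(S.filter (· ≤ x)) < x

instance : DecidablePred PinnacleBound := fun S => by unfold PinnacleBound; infer_instance

namespace PinnacleBound

variable {S T : Finset ℕ}

lemma mono (hTS : T ⊆ S) (hS : PinnacleBound S) : PinnacleBound T := fun x hx =>
  (Nat.mul_le_mul_left 2 (card_le_card (filter_subset_filter _ hTS))).trans_lt (hS x (hTS hx))

lemma insert_of_lt {M : ℕ} (hT : PinnacleBound T) (hlt : ∀ y ∈ T, y < M)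
    (hM : 2 * (#T + 1) < M) : PinnacleBound (insert M T) := by
  have hMT : M ∉ T := fun h => (hlt M h).false
  intro x hx
  rcases mem_insert.1 hx with rfl | hxT
  · rwa [filter_true_of_mem fun y hy => (mem_insert.1 hy).elim le_of_eq fun h => (hlt y h).le,
      card_insert_of_notMem hMT]
  · rw [filter_insert, if_neg (hlt x hxT).not_ge]
    exact hT x hxT

lemma card_lt (hS : PinnacleBound S) {n : ℕ} (hn : n ∈ S) (hle : ∀ y ∈ S, y ≤ n) :
    2 * #S < n := by
  simpa [filter_true_of_mem hle] using hS n hn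

end PinnacleBound

lemma card_insert_pred_min'_union_image_succ {P : Finset ℕ} (hP : P.Nonempty)
    (hpos : ∀ i ∈ P, 0 < i) (hsep : ∀ i ∈ P, i + 1 ∉ P) :
    #(insert (P.min' hP - 1) (P ∪ P.image (· + 1))) = 2 * #P + 1 := by
  have hmin := P.min'_mem hP
  have hdisj : Disjoint P (P.image (· + 1)) := by
    simp only [disjoint_left, mem_image, not_exists, not_and]
    rintro _ hi j hj rfl
    exact hsep j hj hi
  have hnot : P.min' hP - 1 ∉ P ∪ P.image (· + 1) := by
    have := hpos _ hmin
    simp only [mem_union, mem_image, not_or, not_exists, not_and]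
    exact ⟨fun h => by have := P.min'_le _ h; omega,
      fun j hj hj' => by have := P.min'_le _ hj; omega⟩
  rw [card_insert_of_notMem hnot, card_union_of_disjoint hdisj,
    card_image_of_injective _ (add_left_injective 1)]
  ring

lemma pinnacleBound_of_peakValues_eq {f : ℕ → ℕ} {n : ℕ} {S : Finset ℕ}
    (hf : Set.InjOn f (Set.Iio n)) (hS : peakValues f n = S) : PinnacleBound S := by
  classical
  intro x hx
  set P := (range n).filter fun i => IsPeakAt f n i ∧ f i < x
  have hmemP : ∀ i, i ∈ P ↔ IsPeakAt f n i ∧ f i < x := fun i => by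
    simp only [P, mem_filter, mem_range, and_iff_right_iff_imp]
    exact fun h => by have := h.1.2.1; omega
  have hmemS : ∀ v, v ∈ S ↔ ∃ i, IsPeakAt f n i ∧ v = f i + 1 := fun v => by
    rw [← mem_coe, ← hS]; rfl
  have hPS : #P = #(S.filter (· ≤ x)) := by
    refine card_nbij (f · + 1) (fun i hi => ?_)
      (fun i hi j hj hij => hf ?_ ?_ (by simpa using hij)) (fun v hv => ?_)
    · rw [mem_coe, hmemP] at hi
      simpa [hmemS] using ⟨⟨i, hi.1, rfl⟩, hi.2⟩
    · have := ((hmemP i).1 hi).1.2.1; simp; omega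
    · have := ((hmemP j).1 hj).1.2.1; simp; omega
    · simp only [coe_filter, hmemS] at hv
      obtain ⟨⟨i, hi, rfl⟩, hix⟩ := hv
      exact ⟨i, (hmemP i).2 ⟨hi, by omega⟩, rfl⟩
  have hP : P.Nonempty := by
    obtain ⟨i, hi, rfl⟩ := (hmemS x).1 hx
    exact ⟨i, (hmemP i).2 ⟨hi, by omega⟩⟩
  have hQ : ∀ i ∈ insert (P.min' hP - 1) (P ∪ P.image (· + 1)),
      i ∈ Set.Iio n ∧ f i < x := by
    simp only [mem_insert, mem_union, mem_image, Set.mem_Iio]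
    rintro i (rfl | hi | ⟨j, hj, rfl⟩)
    · obtain ⟨⟨-, hn, hl, -⟩, hx⟩ := (hmemP _).1 (P.min'_mem hP)
      omega
    · obtain ⟨⟨-, hn, -, -⟩, hx⟩ := (hmemP i).1 hi
      omega
    · obtain ⟨⟨-, hn, -, hr⟩, hx⟩ := (hmemP j).1 hj
      omega
  have := card_le_card_of_injOn f (t := range x) (fun i hi => by simpa using (hQ i hi).2)
    (hf.mono fun i hi => (hQ i hi).1)
  rw [card_insert_pred_min'_union_image_succ hP (fun i hi => ((hmemP i).1 hi).1.1)
    (fun i hi hi' => ((hmemP i).1 hi).1.not_succ ((hmemP _).1 hi').1), card_range, hPS] at this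
  omega

def insertAt (f : ℕ → ℕ) (p v : ℕ) (i : ℕ) : ℕ :=
  if i < p then f i else if i = p then v else f (i - 1)

section InsertAt

variable {f : ℕ → ℕ} {n p v i : ℕ}

lemma insertAt_of_lt (h : i < p) : insertAt f p v i = f i := if_pos h

lemma insertAt_self : insertAt f p v p = v := by simp [insertAt]

lemma insertAt_of_gt (h : p < i) : insertAt f p v i = f (i - 1) := by
  simp [insertAt, h.not_gt, h.ne']

lemma mapsTo_insertAt (hf : Set.MapsTo f (Set.Iio n) (Set.Iio n)) (hp : p ≤ n) :
    Set.MapsTo (insertAt f p n) (Set.Iio (n + 1)) (Set.Iio (n + 1)) := by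
  intro i hi
  simp only [Set.mem_Iio, insertAt] at *
  have hlt : ∀ k < n, f k < n := fun k hk => hf hk
  have := hlt i; have := hlt (i - 1)
  split_ifs <;> omega

lemma injOn_insertAt (hf : Set.MapsTo f (Set.Iio n) (Set.Iio n)) (hinj : Set.InjOn f (Set.Iio n))
    (hp : p ≤ n) : Set.InjOn (insertAt f p n) (Set.Iio (n + 1)) := by
  intro i hi j hj hij
  simp only [Set.mem_Iio, insertAt] at hi hj hij
  have hlt : ∀ k < n, f k < n := fun k hk => hf hk
  have key : ∀ k l, k < n → l < n → f k = f l → k = l := fun k l hk hl => hinj hk hl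
  -- the inserted value `n` differs from every value of `f` on `[0, n)`
  have := hlt i; have := hlt j; have := hlt (i - 1); have := hlt (j - 1)
  have := key i j; have := key (i - 1) j; have := key i (j - 1); have := key (i - 1) (j - 1)
  split_ifs at hij <;> omega

lemma isPeakAt_insertAt_iff (hf : Set.MapsTo f (Set.Iio n) (Set.Iio n)) (hpn : p ≤ n)
    (hl : ¬IsPeakAt f n (p - 1)) (hr : ¬IsPeakAt f n p) :
    IsPeakAt (insertAt f p n) (n + 1) i ↔
      (i < p ∧ IsPeakAt f n i) ∨ (i = p ∧ 0 < p ∧ p < n) ∨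
        (p < i ∧ IsPeakAt f n (i - 1)) := by
  have hlt : ∀ k < n, f k < n := fun k hk => hf hk
  unfold IsPeakAt at *
  obtain h | h | h | h | h :
      i + 1 < p ∨ i + 1 = p ∨ i = p ∨ i = p + 1 ∨ p + 1 < i := by omega
  · rw [insertAt_of_lt (by omega), insertAt_of_lt (by omega), insertAt_of_lt h]
    omega
  · subst p
    have := hlt i (by omega)
    simp only [Nat.add_sub_cancel] at *
    rw [insertAt_of_lt (by omega), insertAt_of_lt (by omega), insertAt_self]
    omega
  · subst i
    rcases Nat.eq_zero_or_pos p with rfl | hp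
    · simp
    rw [insertAt_of_lt (by omega), insertAt_self, insertAt_of_gt (by omega), Nat.add_sub_cancel]
    constructor
    · rintro ⟨-, hpn, -, -⟩
      exact Or.inr (Or.inl ⟨rfl, hp, by omega⟩)
    · rintro (⟨h, -⟩ | ⟨-, -, hpn⟩ | ⟨h, -⟩)
      · omega
      · exact ⟨hp, by omega, hlt _ (by omega), hlt _ hpn⟩
      · omega
  · subst i
    have := hlt p
    rw [Nat.add_sub_cancel, insertAt_self, insertAt_of_gt (by omega), Nat.add_sub_cancel]
    omega
  · rw [insertAt_of_gt (by omega), insertAt_of_gt (by omega), insertAt_of_gt (by omega),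
      Nat.add_sub_cancel, Nat.sub_add_cancel (show 1 ≤ i by omega)]
    omega

lemma mem_peakValues_insertAt (hf : Set.MapsTo f (Set.Iio n) (Set.Iio n)) (hpn : p ≤ n)
    (hl : ¬IsPeakAt f n (p - 1)) (hr : ¬IsPeakAt f n p) :
    v ∈ peakValues (insertAt f p n) (n + 1) ↔
      v ∈ peakValues f n ∨ (0 < p ∧ p < n ∧ v = n + 1) := by
  have hpeak := fun {i} => isPeakAt_insertAt_iff (i := i) hf hpn hl hr
  constructor
  · rintro ⟨i, hi, rfl⟩
    rcases hpeak.1 hi with ⟨hip, hi⟩ | ⟨rfl, hp, hpn⟩ | ⟨hip, hi⟩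
    · exact Or.inl ⟨i, hi, by rw [insertAt_of_lt hip]⟩
    · exact Or.inr ⟨hp, hpn, by rw [insertAt_self]⟩
    · exact Or.inl ⟨i - 1, hi, by rw [insertAt_of_gt hip]⟩
  · rintro (⟨i, hi, rfl⟩ | ⟨hp, hpn, rfl⟩)
    · by_cases hip : i < p
      · exact ⟨i, hpeak.2 (Or.inl ⟨hip, hi⟩), by rw [insertAt_of_lt hip]⟩
      · refine ⟨i + 1, hpeak.2 (Or.inr (Or.inr ⟨by omega, by simpa using hi⟩)), ?_⟩
        rw [insertAt_of_gt (by omega), Nat.add_sub_cancel]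
    · exact ⟨p, hpeak.2 (Or.inr (Or.inl ⟨rfl, hp, hpn⟩)), by rw [insertAt_self]⟩

end InsertAt

lemma exists_adjacent_not_isPeakAt {f : ℕ → ℕ} {n : ℕ} {S : Finset ℕ}
    (hf : Set.InjOn f (Set.Iio n)) (hS : peakValues f n = S) (hn : 2 * #S + 2 ≤ n) :
    ∃ p, 0 < p ∧ p < n ∧ ¬IsPeakAt f n (p - 1) ∧ ¬IsPeakAt f n p := by
  classical
  by_contra! hcon
  -- otherwise each block `{2j, 2j+1}` with `2j+1 < n` contains a peak
  let pos j := if IsPeakAt f n (2 * j + 1) then 2 * j + 1 else 2 * j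
  have hpos : ∀ j < n / 2, IsPeakAt f n (pos j) ∧ pos j / 2 = j := by
    intro j hj
    by_cases h : IsPeakAt f n (2 * j + 1)
    · simp only [pos, if_pos h]
      exact ⟨h, by omega⟩
    · simp only [pos, if_neg h]
      exact ⟨by_contra fun h' => h (hcon (2 * j + 1) (by omega) (by omega) h'), by omega⟩
  have hposn : ∀ j < n / 2, pos j < n := fun j hj => by have := (hpos j hj).1.2.1; omega
  have := card_le_card_of_injOn (fun j => f (pos j) + 1) (s := range (n / 2)) (t := S)
    (fun j hj => by
      rw [mem_coe, mem_range] at hj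
      rw [mem_coe, ← mem_coe, ← hS]
      exact ⟨pos j, (hpos j hj).1, rfl⟩)
    (fun j hj k hk hjk => by
      rw [coe_range, Set.mem_Iio] at hj hk
      have := hf (hposn j hj) (hposn k hk) (by simpa using hjk)
      rw [← (hpos j hj).2, ← (hpos k hk).2, this])
  rw [card_range] at this
  omega

lemma exists_peakValues_eq (n : ℕ) {S : Finset ℕ} (hS : PinnacleBound S)
    (hle : ∀ x ∈ S, x ≤ n) :
    ∃ f : ℕ → ℕ, Set.MapsTo f (Set.Iio n) (Set.Iio n) ∧ Set.InjOn f (Set.Iio n) ∧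
      peakValues f n = S := by
  induction n generalizing S with
  | zero =>
    obtain rfl : S = ∅ := eq_empty_of_forall_notMem fun x hx => by
      have := hS x hx; have := hle x hx; omega
    refine ⟨id, fun i hi => hi, Set.injOn_id _, ?_⟩
    ext v
    simpa [peakValues] using fun i hi _ => not_isPeakAt_of_le (by omega) hi
  | succ n ih =>
    by_cases hn : n + 1 ∈ S
    · obtain ⟨f, hmaps, hinj, hf⟩ := ih (hS.mono (erase_subset _ _)) fun x hx => by
        have := hle x (mem_of_mem_erase hx); have : x ≠ n + 1 := ne_of_mem_erase hx; omega
      have hcard := hS.card_lt hn hle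
      rw [← card_erase_add_one hn] at hcard
      obtain ⟨p, hp, hpn, hl, hr⟩ := exists_adjacent_not_isPeakAt hinj hf (by omega)
      refine ⟨insertAt f p n, mapsTo_insertAt hmaps hpn.le,
        injOn_insertAt hmaps hinj hpn.le, ?_⟩
      ext v
      rw [mem_peakValues_insertAt hmaps hpn.le hl hr, hf]
      by_cases h : v = n + 1 <;> simp [h, hn, hp, hpn]
    · obtain ⟨f, hmaps, hinj, hf⟩ := ih hS fun x hx => by
        have := hle x hx; have : x ≠ n + 1 := fun h => hn (h ▸ hx); omega
      refine ⟨insertAt f n n, mapsTo_insertAt hmaps le_rfl,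
        injOn_insertAt hmaps hinj le_rfl, ?_⟩
      ext v
      rw [mem_peakValues_insertAt hmaps le_rfl (not_isPeakAt_of_le (by omega))
        (not_isPeakAt_of_le (by omega)), hf]
      simp

lemma admissible_iff_pinnacleBound (S : Finset ℕ) : Admissible S ↔ PinnacleBound S := by
  constructor
  · rintro ⟨n, w, hw⟩
    exact pinnacleBound_of_peakValues_eq (injOn_permSeq w) (pin_eq_peakValues w ▸ hw)
  · intro hS
    obtain ⟨f, hmaps, hinj, hf⟩ :=
      exists_peakValues_eq (S.sup id) hS fun x hx => le_sup (f := id) hx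
    obtain ⟨w, hw⟩ := exists_pin_eq_peakValues hmaps hinj
    exact ⟨_, w, hw.trans hf⟩

def boundedSets (m k : ℕ) : Finset (Finset ℕ) :=
  ((range m).powersetCard k).filter PinnacleBound

def pinnacleSets (m d : ℕ) : Finset (Finset ℕ) :=
  (boundedSets (m + 1) d).filter (m ∈ ·)

lemma mem_boundedSets {m k : ℕ} {T : Finset ℕ} :
    T ∈ boundedSets m k ↔ T ⊆ range m ∧ #T = k ∧ PinnacleBound T := by
  simp [boundedSets, and_assoc]

lemma padm_eq_card_pinnacleSets (m d : ℕ) : padm m d = #(pinnacleSets m d) := by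
  rw [padm, ← Nat.card_eq_finsetCard]
  refine Nat.card_congr (Equiv.subtypeEquivRight fun S => ?_)
  simp only [pinnacleSets, mem_filter, mem_boundedSets, admissible_iff_pinnacleBound,
    max'_eq_iff, subset_iff, mem_range, Nat.lt_succ_iff]
  exact ⟨fun ⟨hS, hd, _, hm, hle⟩ => ⟨⟨hle, hd, hS⟩, hm⟩,
    fun ⟨⟨hle, hd, hS⟩, hm⟩ => ⟨hS, hd, ⟨m, hm⟩, hm, hle⟩⟩

lemma pinnacleSets_zero (m : ℕ) : pinnacleSets m 0 = ∅ := by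
  simp [pinnacleSets, boundedSets]

lemma boundedSets_filter_notMem (m k : ℕ) :
    (boundedSets (m + 1) k).filter (m ∉ ·) = boundedSets m k := by
  ext T
  simp only [mem_filter, mem_boundedSets, subset_iff, mem_range]
  constructor
  · rintro ⟨⟨hlt, hk, hT⟩, hm⟩
    refine ⟨fun x hx => ?_, hk, hT⟩
    have := hlt hx
    have : x ≠ m := fun h => hm (h ▸ hx)
    omega
  · rintro ⟨hlt, hk, hT⟩
    exact ⟨⟨fun x hx => (hlt hx).trans m.lt_succ_self, hk, hT⟩, fun hm => (hlt hm).false⟩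

lemma card_pinnacleSets_succ {m k : ℕ} (h : 2 * (k + 1) < m) :
    #(pinnacleSets m (k + 1)) = #(boundedSets m k) := by
  simp only [pinnacleSets]
  refine card_nbij' (·.erase m) (insert m) (fun S hS => ?_) (fun T hT => ?_)
    (fun S hS => insert_erase (mem_filter.1 hS).2) (fun T hT => erase_insert fun hm => ?_)
  · rw [mem_coe, mem_filter, mem_boundedSets] at hS
    obtain ⟨⟨hsub, hcard, hS⟩, hm⟩ := hS
    refine mem_boundedSets.2 ⟨fun x hx => ?_,
      by rw [card_erase_of_mem hm, hcard, Nat.add_sub_cancel], hS.mono (erase_subset _ _)⟩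
    have := mem_range.1 (hsub (mem_of_mem_erase hx))
    have : x ≠ m := ne_of_mem_erase hx
    rw [mem_range]
    omega
  · obtain ⟨hsub, hcard, hT⟩ := mem_boundedSets.1 hT
    have hlt : ∀ y ∈ T, y < m := fun y hy => mem_range.1 (hsub hy)
    have hm : m ∉ T := fun hm => (hlt m hm).false
    rw [mem_coe, mem_filter, mem_boundedSets]
    refine ⟨⟨insert_subset (by simp) (hsub.trans (range_subset_range.2 m.le_succ)), ?_,
      hT.insert_of_lt hlt (by omega)⟩, mem_insert_self _ _⟩
    rw [card_insert_of_notMem hm, hcard]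
  · exact (mem_range.1 ((mem_boundedSets.1 hT).1 hm)).false

theorem padm_recurrence_general (m d : ℕ) (h : 2 * d < m - 1) :
    padm m d = padm (m - 1) d + padm (m - 1) (d - 1) := by
  obtain ⟨m, rfl⟩ : ∃ k, m = k + 1 := ⟨m - 1, by omega⟩
  simp only [padm_eq_card_pinnacleSets, Nat.add_sub_cancel] at h ⊢
  rcases d with _ | k
  · simp [pinnacleSets_zero]
  · rw [card_pinnacleSets_succ (by omega), card_pinnacleSets_succ (by omega), Nat.add_sub_cancel,
      ← boundedSets_filter_notMem m k, pinnacleSets]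
    exact (card_filter_add_card_filter_not fun S : Finset ℕ => m ∈ S).symm.trans (add_comm _ _)

theorem padm_recurrence (m d : ℕ) (hd : 1 ≤ d) (h : 2 * d < m - 1) :
    padm m d = padm (m - 1) d + padm (m - 1) (d - 1) :=
  padm_recurrence_general m d h
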